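/- arXiv:2505.24657 — 2 statements merged into one kernel-verified Lean document; each statement's English description precedes it below -/
import Mathlib

section
/- Let (X,d_X) and (Y,d_Y) be compact metric spaces, and let (X, f_{1,∞}) and (Y, g_{1,∞}) be non-autonomous discrete systems such that f_{1,∞} and g_{1,∞} are feeble open, every f_n and every g_n is surjective, (f_n) converges uniformly to a continuous map f : X → X with the compositions (f_r^k) converging collectively to (f^k), and (g_n) converges uniformly to a continuous map g : Y → Y with the compositions (g_r^k) converging collectively to (g^k). If f_{1,∞} and g_{1,∞} are both syndetically transitive and weakly mixing, then the product NDS (X × Y, (f_n × g_n)_{n≥1}) is syndetically transitive and weakly mixing. -/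
open Set Filter

/-- `nds f i n` is the `n`-step composition `f_i^n = f (i+n-1) ∘ ⋯ ∘ f i`, with `nds f i 0 = id`. -/
def nds {X : Type*} (f : ℕ → X → X) (i : ℕ) : ℕ → X → X
  | 0 => id
  | n + 1 => f (i + n) ∘ nds f i n

section TopDefs

variable {X : Type*} [TopologicalSpace X]

/-- The NDS `f_{1,∞}` is (topologically) transitive. -/
def NDSTransitive (f : ℕ → X → X) : Prop :=
  ∀ U V : Set X, IsOpen U → U.Nonempty → IsOpen V → V.Nonempty →
    ∃ n : ℕ, 0 < n ∧ (nds f 1 n '' U ∩ V).Nonempty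

/-- The NDS `f_{1,∞}` is mixing. -/
def NDSMixing (f : ℕ → X → X) : Prop :=
  ∀ U V : Set X, IsOpen U → U.Nonempty → IsOpen V → V.Nonempty →
    ∃ N : ℕ, ∀ n : ℕ, N ≤ n → (nds f 1 n '' U ∩ V).Nonempty

/-- The NDS `f_{1,∞}` is weakly mixing. -/
def NDSWeaklyMixing (f : ℕ → X → X) : Prop :=
  ∀ U₁ U₂ V₁ V₂ : Set X, IsOpen U₁ → U₁.Nonempty → IsOpen U₂ → U₂.Nonempty →
    IsOpen V₁ → V₁.Nonempty → IsOpen V₂ → V₂.Nonempty →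
    ∃ n : ℕ, 0 < n ∧ (nds f 1 n '' U₁ ∩ V₁).Nonempty ∧ (nds f 1 n '' U₂ ∩ V₂).Nonempty

/-- The NDS `f_{1,∞}` is multi-transitive. -/
def NDSMultiTransitive (f : ℕ → X → X) : Prop :=
  ∀ m : ℕ, 0 < m → ∀ U V : Fin m → Set X,
    (∀ j, IsOpen (U j)) → (∀ j, (U j).Nonempty) →
    (∀ j, IsOpen (V j)) → (∀ j, (V j).Nonempty) →
    ∃ l : ℕ, 0 < l ∧ ∀ j : Fin m, (nds f 1 (l * (j.1 + 1)) '' U j ∩ V j).Nonempty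

/-- The NDS `f_{1,∞}` is totally transitive. -/
def NDSTotallyTransitive (f : ℕ → X → X) : Prop :=
  ∀ k : ℕ, 0 < k → ∀ U V : Set X, IsOpen U → U.Nonempty → IsOpen V → V.Nonempty →
    ∃ n : ℕ, 0 < n ∧ (nds f 1 (n * k) '' U ∩ V).Nonempty

/-- The NDS `f_{1,∞}` is minimal: every orbit is dense. -/
def NDSMinimal (f : ℕ → X → X) : Prop :=
  ∀ x : X, Dense (Set.range fun n : ℕ => nds f 1 n x)

/-- The NDS `f_{1,∞}` is feeble open. -/
def FeebleOpen (f : ℕ → X → X) : Prop :=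
  ∀ i : ℕ, 1 ≤ i → ∀ U : Set X, IsOpen U → U.Nonempty → (interior (f i '' U)).Nonempty

/-- A set of positive integers is syndetic (has bounded gaps). -/
def SyndeticSet (A : Set ℕ) : Prop :=
  ∃ M : ℕ, ∀ i : ℕ, 1 ≤ i → ∃ j ∈ A, i ≤ j ∧ j ≤ i + M

/-- A set of positive integers is thick (contains arbitrarily long runs). -/
def ThickSet (A : Set ℕ) : Prop :=
  ∀ p : ℕ, ∃ n : ℕ, ∀ j : ℕ, n ≤ j → j ≤ n + p → j ∈ A

/-- The NDS `f_{1,∞}` is syndetically transitive. -/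
def NDSSyndeticallyTransitive (f : ℕ → X → X) : Prop :=
  ∀ U V : Set X, IsOpen U → U.Nonempty → IsOpen V → V.Nonempty →
    SyndeticSet {n : ℕ | 0 < n ∧ (nds f 1 n '' U ∩ V).Nonempty}

/-- The NDS `f_{1,∞}` has dense periodic points. -/
def NDSDensePeriodicPoints (f : ℕ → X → X) : Prop :=
  Dense {x : X | ∃ k : ℕ, 0 < k ∧ ∀ n : ℕ, 0 < n → nds f 1 (k * n) x = x}

/-- The NDS `f_{k,∞}` is strongly transitive. -/
def NDSStronglyTransitiveFrom (f : ℕ → X → X) (k : ℕ) : Prop :=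
  ∀ U : Set X, IsOpen U → U.Nonempty →
    ∃ M : ℕ, 0 < M ∧ (⋃ i ∈ Set.Icc 1 M, nds f k i '' U) = Set.univ

/-- An autonomous map is transitive. -/
def MapTransitive {Y : Type*} [TopologicalSpace Y] (g : Y → Y) : Prop :=
  ∀ U V : Set Y, IsOpen U → U.Nonempty → IsOpen V → V.Nonempty →
    ∃ n : ℕ, 0 < n ∧ (g^[n] '' U ∩ V).Nonempty

/-- An autonomous map is weakly mixing. -/
def MapWeaklyMixing {Y : Type*} [TopologicalSpace Y] (g : Y → Y) : Prop :=
  ∀ U₁ U₂ V₁ V₂ : Set Y, IsOpen U₁ → U₁.Nonempty → IsOpen U₂ → U₂.Nonempty →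
    IsOpen V₁ → V₁.Nonempty → IsOpen V₂ → V₂.Nonempty →
    ∃ n : ℕ, 0 < n ∧ (g^[n] '' U₁ ∩ V₁).Nonempty ∧ (g^[n] '' U₂ ∩ V₂).Nonempty

/-- An autonomous map is totally transitive. -/
def MapTotallyTransitive {Y : Type*} [TopologicalSpace Y] (g : Y → Y) : Prop :=
  ∀ k : ℕ, 0 < k → ∀ U V : Set Y, IsOpen U → U.Nonempty → IsOpen V → V.Nonempty →
    ∃ n : ℕ, 0 < n ∧ (g^[n * k] '' U ∩ V).Nonempty

/-- An autonomous map is syndetically transitive. -/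
def MapSyndeticallyTransitive {Y : Type*} [TopologicalSpace Y] (g : Y → Y) : Prop :=
  ∀ U V : Set Y, IsOpen U → U.Nonempty → IsOpen V → V.Nonempty →
    SyndeticSet {n : ℕ | 0 < n ∧ (g^[n] '' U ∩ V).Nonempty}

/-- An autonomous map is minimal. -/
def MapMinimal {Y : Type*} [TopologicalSpace Y] (g : Y → Y) : Prop :=
  ∀ x : Y, Dense (Set.range fun n : ℕ => g^[n] x)

end TopDefs

section MetricDefs

variable {X : Type*} [MetricSpace X]

/-- The compositions `(f_r^k)` converge collectively to `(f^k)` (w.r.t. the supremum metric). -/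
def CollectivelyConverges (f : ℕ → X → X) (g : X → X) : Prop :=
  ∀ ε : ℝ, 0 < ε → ∃ r₀ : ℕ, ∀ r : ℕ, r₀ ≤ r → ∀ k : ℕ, 1 ≤ k → ∀ x : X,
    dist (nds f r k x) (g^[k] x) < ε

/-- `N(U, δ)`: the times at which the NDS is `δ`-sensitive on `U`. -/
def SensSet (f : ℕ → X → X) (U : Set X) (δ : ℝ) : Set ℕ :=
  {n : ℕ | 0 < n ∧ ∃ x ∈ U, ∃ y ∈ U, δ < dist (nds f 1 n x) (nds f 1 n y)}

/-- The NDS `f_{1,∞}` is multi-sensitive. -/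
def NDSMultiSensitive (f : ℕ → X → X) : Prop :=
  ∃ δ : ℝ, 0 < δ ∧ ∀ m : ℕ, 0 < m → ∀ U : Fin m → Set X,
    (∀ i, IsOpen (U i)) → (∀ i, (U i).Nonempty) → (⋂ i, SensSet f (U i) δ).Nonempty

/-- The NDS `f_{1,∞}` is thickly sensitive. -/
def NDSThicklySensitive (f : ℕ → X → X) : Prop :=
  ∃ δ : ℝ, 0 < δ ∧ ∀ U : Set X, IsOpen U → U.Nonempty → ThickSet (SensSet f U δ)

/-- The NDS `f_{1,∞}` is syndetically sensitive. -/
def NDSSyndeticallySensitive (f : ℕ → X → X) : Prop :=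
  ∃ δ : ℝ, 0 < δ ∧ ∀ U : Set X, IsOpen U → U.Nonempty → SyndeticSet (SensSet f U δ)

/-- The NDS `f_{1,∞}` is mildly mixing: its product with every transitive NDS on a compact
metric space is transitive. -/
def NDSMildlyMixing (f : ℕ → X → X) : Prop :=
  ∀ (Y : Type*) [MetricSpace Y] [CompactSpace Y] (g : ℕ → Y → Y),
    (∀ n : ℕ, 1 ≤ n → Continuous (g n)) → NDSTransitive g →
    NDSTransitive (fun n (p : X × Y) => (f n p.1, g n p.2))

/-- The NDS `f_{1,∞}` is Li–Yorke chaotic. -/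
def LiYorkeChaotic (f : ℕ → X → X) : Prop :=
  ∃ S : Set X, ¬S.Countable ∧ ∀ x ∈ S, ∀ y ∈ S, x ≠ y →
    Filter.liminf (fun n : ℕ => dist (nds f 1 n x) (nds f 1 n y)) Filter.atTop = 0 ∧
    0 < Filter.limsup (fun n : ℕ => dist (nds f 1 n x) (nds f 1 n y)) Filter.atTop

end MetricDefs


/-!
Collective convergence makes `f_1^{m+k}` uniformly close to `F^k ∘ f_1^m` for a suitable fixed
`m`, so the limit map `F` inherits syndetic transitivity and weak mixing from `f_{1,∞}`. For the
weakly mixing map `F`, Furstenberg's intersection trick turns the finitely many conditions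
`F^{k+j}(A) ∩ V ≠ ∅`, `j ≤ p`, into a single transitivity condition; with `A` the interior of
`f_1^m(U)` (nonempty by feeble openness), syndetic transitivity of `F` then makes the hitting times
`N(U, V)` of `f_{1,∞}` thickly syndetic. Thickly syndetic sets are closed under intersection, and
the hitting times of the product system between boxes are the intersections of those of the
factors.
-/

open Metric Function Topology

section Nds

variable {X : Type*}

lemma nds_add (f : ℕ → X → X) (i m k : ℕ) : nds f i (m + k) = nds f (i + m) k ∘ nds f i m := by
  induction k with
  | zero => rfl
  | succ k ih =>
    change f (i + (m + k)) ∘ nds f i (m + k) = f (i + m + k) ∘ nds f (i + m) k ∘ nds f i m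
    rw [ih, Nat.add_assoc]

lemma nds_prod {Y : Type*} (f : ℕ → X → X) (g : ℕ → Y → Y) (i k : ℕ) :
    nds (fun n (p : X × Y) => (f n p.1, g n p.2)) i k =
      fun p => (nds f i k p.1, nds g i k p.2) := by
  induction k with
  | zero => rfl
  | succ k ih => exact congrArg (fun φ => (fun p : X × Y => (f (i + k) p.1, g (i + k) p.2)) ∘ φ) ih

lemma nds_surjective {f : ℕ → X → X} (hsurj : ∀ n, 1 ≤ n → Surjective (f n)) {i : ℕ}
    (hi : 1 ≤ i) (k : ℕ) : Surjective (nds f i k) := by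
  induction k with
  | zero => exact surjective_id
  | succ k ih => exact (hsurj (i + k) (by omega)).comp ih

variable [TopologicalSpace X]

lemma nds_continuous {f : ℕ → X → X} (hcont : ∀ n, 1 ≤ n → Continuous (f n)) {i : ℕ}
    (hi : 1 ≤ i) (k : ℕ) : Continuous (nds f i k) := by
  induction k with
  | zero => exact continuous_id
  | succ k ih => exact (hcont (i + k) (by omega)).comp ih

lemma FeebleOpen.nonempty_interior_image_nds {f : ℕ → X → X} (hf : FeebleOpen f) {i : ℕ}
    (hi : 1 ≤ i) (k : ℕ) {U : Set X} (hU : IsOpen U) (hUne : U.Nonempty) :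
    (interior (nds f i k '' U)).Nonempty := by
  induction k with
  | zero => simpa [nds, hU.interior_eq] using hUne
  | succ k ih =>
    refine (hf (i + k) (by omega) _ isOpen_interior ih).mono (interior_mono ?_)
    change f (i + k) '' interior (nds f i k '' U) ⊆ (f (i + k) ∘ nds f i k) '' U
    rw [image_comp]
    exact image_mono interior_subset

end Nds

section Syndetic

def ThicklySyndetic (A : Set ℕ) : Prop :=
  ∀ p : ℕ, SyndeticSet {n | Icc n (n + p) ⊆ A}

lemma SyndeticSet.mono {A B : Set ℕ} (h : SyndeticSet A) (hAB : A ⊆ B) : SyndeticSet B := by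
  obtain ⟨M, hM⟩ := h
  refine ⟨M, fun i hi => ?_⟩
  obtain ⟨j, hj, hij⟩ := hM i hi
  exact ⟨j, hAB hj, hij⟩

lemma SyndeticSet.nonempty {A : Set ℕ} (h : SyndeticSet A) : A.Nonempty := by
  obtain ⟨M, hM⟩ := h
  obtain ⟨j, hj, -⟩ := hM 1 le_rfl
  exact ⟨j, hj⟩

lemma SyndeticSet.image_add {A : Set ℕ} (h : SyndeticSet A) (m : ℕ) :
    SyndeticSet ((m + ·) '' A) := by
  obtain ⟨M, hM⟩ := h
  refine ⟨M + m, fun i hi => ?_⟩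
  obtain ⟨j, hj, hij⟩ := hM i hi
  exact ⟨m + j, mem_image_of_mem _ hj, by omega, by omega⟩

lemma SyndeticSet.preimage_add {A : Set ℕ} (h : SyndeticSet A) (m : ℕ) :
    SyndeticSet {k | 0 < k ∧ m + k ∈ A} := by
  obtain ⟨M, hM⟩ := h
  refine ⟨M, fun i hi => ?_⟩
  obtain ⟨j, hj, hij⟩ := hM (m + i) (by omega)
  exact ⟨j - m, ⟨by omega, by rwa [Nat.add_sub_cancel' (by omega)]⟩, by omega, by omega⟩

lemma ThicklySyndetic.syndeticSet {A : Set ℕ} (h : ThicklySyndetic A) : SyndeticSet A :=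
  (h 0).mono fun _ hn => hn ⟨le_rfl, le_rfl⟩

lemma ThicklySyndetic.mono {A B : Set ℕ} (h : ThicklySyndetic A) (hAB : A ⊆ B) :
    ThicklySyndetic B :=
  fun p => (h p).mono fun _ hn => hn.trans hAB

/-- A run of length `p` in `A` is found inside each run of length `p + M` in `B`, where `M` is
the syndeticity constant of the runs of length `p` in `A`. -/
lemma ThicklySyndetic.inter {A B : Set ℕ} (hA : ThicklySyndetic A) (hB : ThicklySyndetic B) :
    ThicklySyndetic (A ∩ B) := by
  intro p
  obtain ⟨MA, hMA⟩ := hA p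
  obtain ⟨MB, hMB⟩ := hB (p + MA)
  refine ⟨MB + MA, fun i hi => ?_⟩
  obtain ⟨nB, hnB, hinB⟩ := hMB i hi
  obtain ⟨nA, hnA, hinA⟩ := hMA nB (by omega)
  exact ⟨nA, fun j ⟨hj₁, hj₂⟩ => ⟨hnA ⟨hj₁, hj₂⟩, hnB ⟨by omega, by omega⟩⟩, by omega, by omega⟩

end Syndetic

section HitTimes

variable {X : Type*}

/-- The hitting-time set `N(U, V)`. -/
def hitTimes (f : ℕ → X → X) (U V : Set X) : Set ℕ :=
  {n | 0 < n ∧ (nds f 1 n '' U ∩ V).Nonempty}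

lemma hitTimes_mono {f : ℕ → X → X} {U U' V V' : Set X} (hU : U ⊆ U') (hV : V ⊆ V') :
    hitTimes f U V ⊆ hitTimes f U' V' :=
  fun _ ⟨hn, hne⟩ => ⟨hn, hne.mono (inter_subset_inter (image_mono hU) hV)⟩

lemma hitTimes_prod {Y : Type*} (f : ℕ → X → X) (g : ℕ → Y → Y) (U V : Set X) (U' V' : Set Y) :
    hitTimes (fun n (p : X × Y) => (f n p.1, g n p.2)) (U ×ˢ U') (V ×ˢ V') =
      hitTimes f U V ∩ hitTimes g U' V' := by
  ext n
  simp only [hitTimes, nds_prod, ← prod_image_image_eq, prod_inter_prod, prod_nonempty_iff,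
    mem_ofPred_eq, mem_inter_iff]
  tauto

variable [TopologicalSpace X]

def NDSThicklySyndeticallyTransitive (f : ℕ → X → X) : Prop :=
  ∀ U V : Set X, IsOpen U → U.Nonempty → IsOpen V → V.Nonempty →
    ThicklySyndetic (hitTimes f U V)

lemma exists_isOpen_prod_subset {Y : Type*} [TopologicalSpace Y] {W : Set (X × Y)}
    (hW : IsOpen W) (hne : W.Nonempty) :
    ∃ U V, IsOpen U ∧ U.Nonempty ∧ IsOpen V ∧ V.Nonempty ∧ U ×ˢ V ⊆ W := by
  obtain ⟨⟨a, b⟩, hab⟩ := hne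
  obtain ⟨U, V, hU, hV, ha, hb, hUV⟩ := isOpen_prod_iff.1 hW a b hab
  exact ⟨U, V, hU, ⟨a, ha⟩, hV, ⟨b, hb⟩, hUV⟩

namespace NDSThicklySyndeticallyTransitive

variable {f : ℕ → X → X}

lemma prod {Y : Type*} [TopologicalSpace Y] {g : ℕ → Y → Y}
    (hf : NDSThicklySyndeticallyTransitive f) (hg : NDSThicklySyndeticallyTransitive g) :
    NDSThicklySyndeticallyTransitive (fun n (p : X × Y) => (f n p.1, g n p.2)) := by
  intro W W' hW hWne hW' hW'ne
  obtain ⟨U, U', hU, hUne, hU', hU'ne, hUW⟩ := exists_isOpen_prod_subset hW hWne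
  obtain ⟨V, V', hV, hVne, hV', hV'ne, hVW⟩ := exists_isOpen_prod_subset hW' hW'ne
  refine ((hf U V hU hUne hV hVne).inter (hg U' V' hU' hU'ne hV' hV'ne)).mono ?_
  rw [← hitTimes_prod]
  exact hitTimes_mono hUW hVW

lemma syndeticallyTransitive (h : NDSThicklySyndeticallyTransitive f) :
    NDSSyndeticallyTransitive f :=
  fun U V hU hUne hV hVne => (h U V hU hUne hV hVne).syndeticSet

lemma weaklyMixing (h : NDSThicklySyndeticallyTransitive f) : NDSWeaklyMixing f := by
  intro U₁ U₂ V₁ V₂ hU₁ hU₁ne hU₂ hU₂ne hV₁ hV₁ne hV₂ hV₂ne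
  obtain ⟨n, ⟨hn, h₁⟩, -, h₂⟩ :=
    ((h U₁ V₁ hU₁ hU₁ne hV₁ hV₁ne).inter (h U₂ V₂ hU₂ hU₂ne hV₂ hV₂ne)).syndeticSet.nonempty
  exact ⟨n, hn, h₁, h₂⟩

end NDSThicklySyndeticallyTransitive

end HitTimes

section WeaklyMixing

variable {X : Type*} [TopologicalSpace X]

lemma exists_isOpen_forall_image_disjoint {Y ι : Type*} [TopologicalSpace Y] [T2Space Y]
    {φ : ι → X → Y} {s : Finset ι} (hφ : ∀ n ∈ s, Continuous (φ n)) {a : X} {w : Y}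
    (h : ∀ n ∈ s, φ n a ≠ w) :
    ∃ U V, IsOpen U ∧ a ∈ U ∧ IsOpen V ∧ w ∈ V ∧ ∀ n ∈ s, Disjoint (φ n '' U) V := by
  have hev : ∀ᶠ q in 𝓝 a ×ˢ 𝓝 w, ∀ n ∈ s, φ n q.1 ≠ q.2 := by
    rw [← nhds_prod_eq, eventually_all_finset]
    exact fun n hn =>
      (isClosed_eq ((hφ n hn).comp continuous_fst) continuous_snd).isOpen_compl.mem_nhds (h n hn)
  obtain ⟨pa, hpa, pb, hpb, hab⟩ := eventually_prod_iff.1 hev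
  obtain ⟨U, hUpa, hU, haU⟩ := _root_.eventually_nhds_iff.1 hpa
  obtain ⟨V, hVpb, hV, hwV⟩ := _root_.eventually_nhds_iff.1 hpb
  refine ⟨U, V, hU, haU, hV, hwV, fun n hn => disjoint_left.2 ?_⟩
  rintro _ ⟨x, hx, rfl⟩ hy
  exact hab (hUpa x hx) (hVpb _ hy) n hn rfl

/-- Two points with disjoint neighbourhoods cannot both be visited at the same time by the
orbit of an isolated point. -/
lemma NDSWeaklyMixing.perfectSpace [T2Space X] [Nontrivial X] {f : ℕ → X → X}
    (hwm : NDSWeaklyMixing f) : PerfectSpace X := by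
  refine perfectSpace_iff_forall_not_isolated.2 fun z => ⟨fun hbot => ?_⟩
  have hz : IsOpen {z} := isOpen_singleton_iff_punctured_nhds z |>.2 hbot
  obtain ⟨x, y, hxy⟩ := exists_pair_ne X
  obtain ⟨O₁, O₂, hO₁, hO₂, hx, hy, hdisj⟩ := t2_separation hxy
  obtain ⟨n, -, h₁, h₂⟩ := hwm {z} {z} O₁ O₂ hz ⟨z, rfl⟩ hz ⟨z, rfl⟩ hO₁ ⟨x, hx⟩ hO₂ ⟨y, hy⟩
  rw [image_singleton, singleton_inter_nonempty] at h₁ h₂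
  exact disjoint_left.1 hdisj h₁ h₂

/-- Shrinking `U₁` and `V₁` around a point `a` and a point of `V₁` off the orbit segment
`a, f_1(a), …, f_1^m(a)` rules out every time `n ≤ m`. -/
lemma NDSWeaklyMixing.exists_lt_hit [T2Space X] {f : ℕ → X → X}
    (hcont : ∀ n, 1 ≤ n → Continuous (f n)) (hwm : NDSWeaklyMixing f) (m : ℕ)
    {U₁ U₂ V₁ V₂ : Set X} (hU₁ : IsOpen U₁) (hU₁ne : U₁.Nonempty) (hU₂ : IsOpen U₂)
    (hU₂ne : U₂.Nonempty) (hV₁ : IsOpen V₁) (hV₁ne : V₁.Nonempty) (hV₂ : IsOpen V₂)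
    (hV₂ne : V₂.Nonempty) :
    ∃ n, m < n ∧ (nds f 1 n '' U₁ ∩ V₁).Nonempty ∧ (nds f 1 n '' U₂ ∩ V₂).Nonempty := by
  rcases subsingleton_or_nontrivial X with hX | hX
  · have hmeet {s t : Set X} : s.Nonempty → t.Nonempty → (s ∩ t).Nonempty :=
      fun ⟨x, hx⟩ ⟨y, hy⟩ => ⟨x, hx, Subsingleton.elim y x ▸ hy⟩
    exact ⟨m + 1, m.lt_succ_self, hmeet (hU₁ne.image _) hV₁ne, hmeet (hU₂ne.image _) hV₂ne⟩
  have := hwm.perfectSpace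
  obtain ⟨a, haU₁⟩ := hU₁ne
  obtain ⟨v, hv⟩ := hV₁ne
  obtain ⟨w, hwV₁, hw⟩ := (infinite_of_mem_nhds v (hV₁.mem_nhds hv)).exists_notMem_finite
    ((Finset.range (m + 1)).finite_toSet.image fun n => nds f 1 n a)
  obtain ⟨U, V, hU, haU, hV, hwV, hdisj⟩ := exists_isOpen_forall_image_disjoint
    (s := Finset.range (m + 1)) (fun n _ => nds_continuous hcont le_rfl n)
    (fun n hn hnw => hw ⟨n, hn, hnw⟩)
  obtain ⟨n, -, h₁, h₂⟩ := hwm (U ∩ U₁) U₂ (V ∩ V₁) V₂ (hU.inter hU₁) ⟨a, haU, haU₁⟩ hU₂ hU₂ne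
    (hV.inter hV₁) ⟨w, hwV, hwV₁⟩ hV₂ hV₂ne
  refine ⟨n, ?_, h₁.mono (inter_subset_inter (image_mono inter_subset_right) inter_subset_right),
    h₂⟩
  by_contra! hnm
  exact not_disjoint_iff_nonempty_inter.2
    (h₁.mono (inter_subset_inter (image_mono inter_subset_left) inter_subset_left))
    (hdisj n (Finset.mem_range_succ_iff.2 hnm))

variable {F : X → X}

lemma MapWeaklyMixing.exists_hit_imp_hit_and_hit (hwm : MapWeaklyMixing F) (hF : Continuous F)
    {A₁ B₁ A₂ B₂ : Set X} (hA₁ : IsOpen A₁) (hA₁ne : A₁.Nonempty) (hB₁ : IsOpen B₁)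
    (hB₁ne : B₁.Nonempty) (hA₂ : IsOpen A₂) (hA₂ne : A₂.Nonempty) (hB₂ : IsOpen B₂)
    (hB₂ne : B₂.Nonempty) :
    ∃ A B : Set X, IsOpen A ∧ A.Nonempty ∧ IsOpen B ∧ B.Nonempty ∧ ∀ n,
      (F^[n] '' A ∩ B).Nonempty → (F^[n] '' A₁ ∩ B₁).Nonempty ∧ (F^[n] '' A₂ ∩ B₂).Nonempty := by
  obtain ⟨n₀, -, ⟨_, ⟨a, ha₁, rfl⟩, ha₂⟩, ⟨_, ⟨b, hb₁, rfl⟩, hb₂⟩⟩ :=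
    hwm A₁ B₁ A₂ B₂ hA₁ hA₁ne hB₁ hB₁ne hA₂ hA₂ne hB₂ hB₂ne
  refine ⟨A₁ ∩ F^[n₀] ⁻¹' A₂, B₁ ∩ F^[n₀] ⁻¹' B₂,
    hA₁.inter ((hF.iterate n₀).isOpen_preimage _ hA₂), ⟨a, ha₁, ha₂⟩,
    hB₁.inter ((hF.iterate n₀).isOpen_preimage _ hB₂), ⟨b, hb₁, hb₂⟩, ?_⟩
  rintro n ⟨_, ⟨x, hx, rfl⟩, hy⟩
  refine ⟨⟨_, mem_image_of_mem _ hx.1, hy.1⟩, ⟨F^[n] (F^[n₀] x), mem_image_of_mem _ hx.2, ?_⟩⟩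
  rw [(Commute.iterate_iterate_self F n n₀).eq]
  exact hy.2

/-- Furstenberg's intersection lemma. -/
lemma MapWeaklyMixing.exists_hit_imp_forall_hit (hwm : MapWeaklyMixing F) (hF : Continuous F)
    {A B : ℕ → Set X} (hA : ∀ j, IsOpen (A j)) (hAne : ∀ j, (A j).Nonempty)
    (hB : ∀ j, IsOpen (B j)) (hBne : ∀ j, (B j).Nonempty) (p : ℕ) :
    ∃ A' B' : Set X, IsOpen A' ∧ A'.Nonempty ∧ IsOpen B' ∧ B'.Nonempty ∧ ∀ n,
      (F^[n] '' A' ∩ B').Nonempty → ∀ j ≤ p, (F^[n] '' A j ∩ B j).Nonempty := by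
  induction p with
  | zero =>
    exact ⟨A 0, B 0, hA 0, hAne 0, hB 0, hBne 0, fun n hn j hj => Nat.le_zero.1 hj ▸ hn⟩
  | succ p ih =>
    obtain ⟨A', B', hA', hA'ne, hB', hB'ne, hA'B'⟩ := ih
    obtain ⟨A'', B'', hA'', hA''ne, hB'', hB''ne, h⟩ := hwm.exists_hit_imp_hit_and_hit hF
      hA' hA'ne hB' hB'ne (hA (p + 1)) (hAne (p + 1)) (hB (p + 1)) (hBne (p + 1))
    refine ⟨A'', B'', hA'', hA''ne, hB'', hB''ne, fun n hn j hj => ?_⟩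
    rcases hj.lt_or_eq with hj | rfl
    · exact hA'B' n (h n hn).1 j (by omega)
    · exact (h n hn).2

end WeaklyMixing

section Limit

lemma surjective_of_tendstoUniformly {α β : Type*} [TopologicalSpace α] [CompactSpace α]
    [MetricSpace β] {f : ℕ → α → β} {F : α → β} (hF : Continuous F)
    (hsurj : ∀ n, 1 ≤ n → Surjective (f n)) (hunif : TendstoUniformly f F atTop) :
    Surjective F := by
  intro y
  suffices y ∈ closure (range F) by rwa [(isCompact_range hF).isClosed.closure_eq] at this
  refine Metric.mem_closure_iff.2 fun ε hε => ?_
  obtain ⟨n, hclose, hn⟩ :=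
    ((Metric.tendstoUniformly_iff.1 hunif ε hε).and (eventually_ge_atTop 1)).exists
  obtain ⟨x, rfl⟩ := hsurj n hn y
  exact ⟨F x, mem_range_self x, dist_comm (F x) (f n x) ▸ hclose x⟩

lemma nonempty_image_inter_ball_of_dist_lt {α X : Type*} [PseudoMetricSpace X] {φ ψ : α → X}
    {δ ε : ℝ} (h : ∀ x, dist (ψ x) (φ x) < δ) {S : Set α} {v : X}
    (hS : (φ '' S ∩ ball v ε).Nonempty) : (ψ '' S ∩ ball v (ε + δ)).Nonempty := by
  obtain ⟨_, ⟨x, hx, rfl⟩, hxv⟩ := hS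
  refine ⟨ψ x, mem_image_of_mem ψ hx, ?_⟩
  rw [mem_ball] at hxv ⊢
  linarith [h x, dist_triangle (ψ x) (φ x) v]

variable {X : Type*} [MetricSpace X] {f : ℕ → X → X} {F : X → X}

namespace CollectivelyConverges

lemma exists_dist_nds_lt (hcoll : CollectivelyConverges f F) {ε : ℝ} (hε : 0 < ε) :
    ∃ m, ∀ k, 1 ≤ k → ∀ x, dist (nds f 1 (m + k) x) (F^[k] (nds f 1 m x)) < ε := by
  obtain ⟨r, hr⟩ := hcoll ε hε
  refine ⟨r, fun k hk x => ?_⟩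
  rw [nds_add]
  exact hr (1 + r) (by omega) k hk _

lemma nonempty_iterate_image_inter {m k : ℕ} {δ ε : ℝ}
    (hmk : ∀ x, dist (nds f 1 (m + k) x) (F^[k] (nds f 1 m x)) < δ) {U V : Set X} {v : X}
    (hV : ball v (ε + δ) ⊆ V) (h : (nds f 1 (m + k) '' (nds f 1 m ⁻¹' U) ∩ ball v ε).Nonempty) :
    (F^[k] '' U ∩ V).Nonempty := by
  obtain ⟨y, hyU, hyv⟩ := nonempty_image_inter_ball_of_dist_lt (ψ := F^[k] ∘ nds f 1 m)
    (fun x => dist_comm (nds f 1 (m + k) x) _ ▸ hmk x) h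
  rw [image_comp] at hyU
  exact ⟨y, image_mono (image_preimage_subset _ _) hyU, hV hyv⟩

lemma mapSyndeticallyTransitive (hcoll : CollectivelyConverges f F)
    (hcont : ∀ n, 1 ≤ n → Continuous (f n)) (hsurj : ∀ n, 1 ≤ n → Surjective (f n))
    (hsynd : NDSSyndeticallyTransitive f) : MapSyndeticallyTransitive F := by
  intro U V hU hUne hV ⟨v, hv⟩
  obtain ⟨r, hr, hrV⟩ := Metric.isOpen_iff.1 hV v hv
  obtain ⟨m, hm⟩ := hcoll.exists_dist_nds_lt (half_pos hr)
  refine ((hsynd (nds f 1 m ⁻¹' U) (ball v (r / 2))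
    ((nds_continuous hcont le_rfl m).isOpen_preimage U hU)
    (hUne.preimage (nds_surjective hsurj le_rfl m)) isOpen_ball
    ⟨v, mem_ball_self (half_pos hr)⟩).preimage_add m).mono ?_
  rintro k ⟨hk, -, hhit⟩
  exact ⟨hk, nonempty_iterate_image_inter (hm k hk) (by rwa [add_halves]) hhit⟩

lemma mapWeaklyMixing (hcoll : CollectivelyConverges f F)
    (hcont : ∀ n, 1 ≤ n → Continuous (f n)) (hsurj : ∀ n, 1 ≤ n → Surjective (f n))
    (hwm : NDSWeaklyMixing f) : MapWeaklyMixing F := by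
  intro U₁ U₂ V₁ V₂ hU₁ hU₁ne hU₂ hU₂ne hV₁ ⟨v₁, hv₁⟩ hV₂ ⟨v₂, hv₂⟩
  obtain ⟨r₁, hr₁, hrV₁⟩ := Metric.isOpen_iff.1 hV₁ v₁ hv₁
  obtain ⟨r₂, hr₂, hrV₂⟩ := Metric.isOpen_iff.1 hV₂ v₂ hv₂
  set δ := min r₁ r₂ / 2
  have hδ : 0 < δ := by positivity
  obtain ⟨m, hm⟩ := hcoll.exists_dist_nds_lt hδ
  have hpull {U : Set X} (hU : IsOpen U) (hUne : U.Nonempty) :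
      IsOpen (nds f 1 m ⁻¹' U) ∧ (nds f 1 m ⁻¹' U).Nonempty :=
    ⟨(nds_continuous hcont le_rfl m).isOpen_preimage U hU,
      hUne.preimage (nds_surjective hsurj le_rfl m)⟩
  obtain ⟨n, hmn, h₁, h₂⟩ := hwm.exists_lt_hit hcont m (hpull hU₁ hU₁ne).1 (hpull hU₁ hU₁ne).2
    (hpull hU₂ hU₂ne).1 (hpull hU₂ hU₂ne).2 isOpen_ball ⟨v₁, mem_ball_self hδ⟩ isOpen_ball
    ⟨v₂, mem_ball_self hδ⟩
  obtain ⟨k, hk, rfl⟩ : ∃ k, 1 ≤ k ∧ n = m + k := ⟨n - m, by omega, by omega⟩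
  exact ⟨k, hk,
    nonempty_iterate_image_inter (hm k hk) ((ball_subset_ball (by simp [δ])).trans hrV₁) h₁,
    nonempty_iterate_image_inter (hm k hk) ((ball_subset_ball (by simp [δ])).trans hrV₂) h₂⟩

/-- `N(U, V)` contains `[m + k, m + k + p]` whenever `F^k(A') ∩ B' ≠ ∅`, where `A'`, `B'` are
given by Furstenberg's intersection lemma for the pairs `(A, F^{-j}(B(v, r/2)))`, `j ≤ p`, and
`A` is the interior of `f_1^m(U)`. -/
lemma ndsThicklySyndeticallyTransitive (hcoll : CollectivelyConverges f F)
    (hfo : FeebleOpen f) (hF : Continuous F) (hFsurj : Surjective F)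
    (hFsynd : MapSyndeticallyTransitive F) (hFwm : MapWeaklyMixing F) :
    NDSThicklySyndeticallyTransitive f := by
  intro U V hU hUne hV ⟨v, hv⟩ p
  obtain ⟨r, hr, hrV⟩ := Metric.isOpen_iff.1 hV v hv
  obtain ⟨m, hm⟩ := hcoll.exists_dist_nds_lt (half_pos hr)
  obtain ⟨A', B', hA', hA'ne, hB', hB'ne, hA'B'⟩ := hFwm.exists_hit_imp_forall_hit hF
    (A := fun _ => interior (nds f 1 m '' U)) (B := fun j => F^[j] ⁻¹' ball v (r / 2))
    (fun _ => isOpen_interior) (fun _ => hfo.nonempty_interior_image_nds le_rfl m hU hUne)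
    (fun j => (hF.iterate j).isOpen_preimage _ isOpen_ball)
    (fun j => (nonempty_ball.2 (half_pos hr)).preimage (hFsurj.iterate j)) p
  refine ((hFsynd A' B' hA' hA'ne hB' hB'ne).image_add m).mono ?_
  rintro _ ⟨k, ⟨hk, hkhit⟩, rfl⟩ n ⟨hkn, hnp⟩
  dsimp only at hkn hnp
  obtain ⟨j, rfl⟩ := Nat.exists_eq_add_of_le hkn
  obtain ⟨_, ⟨a, haA, rfl⟩, hav⟩ := hA'B' k hkhit j (by omega)
  obtain ⟨x, hxU, rfl⟩ := interior_subset haA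
  rw [mem_preimage, ← iterate_add_apply] at hav
  obtain ⟨y, hyU, hyv⟩ := nonempty_image_inter_ball_of_dist_lt (φ := F^[j + k] ∘ nds f 1 m)
    (ψ := nds f 1 (m + (j + k))) (hm (j + k) (by omega)) ⟨_, mem_image_of_mem _ hxU, hav⟩
  rw [add_halves] at hyv
  exact ⟨by omega, y, by rwa [show m + k + j = m + (j + k) by omega], hrV hyv⟩

end CollectivelyConverges

end Limit

theorem product_syndeticallyTransitive_weaklyMixing {X : Type*} [MetricSpace X]
    [CompactSpace X] {Y : Type*} [MetricSpace Y] [CompactSpace Y]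
    (f : ℕ → X → X) (F : X → X) (g : ℕ → Y → Y) (G : Y → Y)
    (hcontf : ∀ n : ℕ, 1 ≤ n → Continuous (f n))
    (hcontg : ∀ n : ℕ, 1 ≤ n → Continuous (g n))
    (hfof : FeebleOpen f) (hfog : FeebleOpen g)
    (hsurjf : ∀ n : ℕ, 1 ≤ n → Function.Surjective (f n))
    (hsurjg : ∀ n : ℕ, 1 ≤ n → Function.Surjective (g n))
    (hF : Continuous F) (hG : Continuous G)
    (huniff : TendstoUniformly (fun n x => f n x) F Filter.atTop)
    (hunifg : TendstoUniformly (fun n y => g n y) G Filter.atTop)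
    (hcollf : CollectivelyConverges f F)
    (hcollg : CollectivelyConverges g G)
    (hsyndf : NDSSyndeticallyTransitive f) (hwmf : NDSWeaklyMixing f)
    (hsyndg : NDSSyndeticallyTransitive g) (hwmg : NDSWeaklyMixing g) :
    NDSSyndeticallyTransitive (fun n (p : X × Y) => (f n p.1, g n p.2)) ∧
      NDSWeaklyMixing (fun n (p : X × Y) => (f n p.1, g n p.2)) := by
  have hf : NDSThicklySyndeticallyTransitive f :=
    hcollf.ndsThicklySyndeticallyTransitive hfof hF
      (surjective_of_tendstoUniformly hF hsurjf huniff)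
      (hcollf.mapSyndeticallyTransitive hcontf hsurjf hsyndf)
      (hcollf.mapWeaklyMixing hcontf hsurjf hwmf)
  have hg : NDSThicklySyndeticallyTransitive g :=
    hcollg.ndsThicklySyndeticallyTransitive hfog hG
      (surjective_of_tendstoUniformly hG hsurjg hunifg)
      (hcollg.mapSyndeticallyTransitive hcontg hsurjg hsyndg)
      (hcollg.mapWeaklyMixing hcontg hsurjg hwmg)
  exact ⟨(hf.prod hg).syndeticallyTransitive, (hf.prod hg).weaklyMixing⟩
end

section
/- Let (X,d) be a compact metric space and let (X, f_{1,∞}) be a non-autonomous discrete system such that f_{1,∞} is feeble open, each f_n is surjective, (f_n) converges uniformly to a continuous map f : X → X, and the compositions (f_r^k) converge collectively to (f^k). If f_{1,∞} is totally transitive and has dense periodic points, then f_{1,∞} is weakly mixing. -/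
open Set Filter

/-!
Collective convergence lets the limit map `F` shadow every tail `f_r^k` (`r` large) uniformly in
`k`. Hence the total transitivity and the periodic points of the system pass to `F`, so `F` is
weakly mixing by Banks' argument: a `k`-periodic point of `U₂ ∩ F^{-a}V₂` lies in `V₂` at all
times `a + mk`, and total transitivity sends `U₁` into `F^{-a}V₁` under some `F^{mk}`. Feeble
openness brings weak mixing of `F` back: `f_1^r(Uᵢ)` contains an open set, on which `F^N` and
`f_{1+r}^N` agree up to the shadowing error.
-/

open Function Metric

section Composition

variable {X : Type*} {f : ℕ → X → X}

lemma nds_add_apply (i m n : ℕ) (x : X) : nds f i (m + n) x = nds f (i + m) n (nds f i m x) := by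
  induction n with
  | zero => rfl
  | succ n ih =>
    change f (i + (m + n)) (nds f i (m + n) x) = f (i + m + n) (nds f (i + m) n (nds f i m x))
    rw [ih, Nat.add_assoc]

lemma continuous_nds [TopologicalSpace X] (hcont : ∀ n, 1 ≤ n → Continuous (f n)) {i : ℕ}
    (hi : 1 ≤ i) (n : ℕ) : Continuous (nds f i n) := by
  induction n with
  | zero => exact continuous_id
  | succ n ih => exact (hcont (i + n) (by omega)).comp ih

lemma surjective_nds (hsurj : ∀ n, 1 ≤ n → Surjective (f n)) {i : ℕ} (hi : 1 ≤ i) (n : ℕ) :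
    Surjective (nds f i n) := by
  induction n with
  | zero => exact surjective_id
  | succ n ih => exact (hsurj (i + n) (by omega)).comp ih

lemma FeebleOpen.interior_image_nds_nonempty [TopologicalSpace X] (hfo : FeebleOpen f) (r : ℕ)
    {U : Set X} (hUo : IsOpen U) (hU : U.Nonempty) : (interior (nds f 1 r '' U)).Nonempty := by
  induction r with
  | zero => simpa [nds, hUo.interior_eq] using hU
  | succ r ih =>
    refine (hfo (1 + r) (by omega) _ isOpen_interior ih).mono (interior_mono ?_)
    rw [nds, image_comp]
    exact image_mono interior_subset

lemma NDSTotallyTransitive.exists_add_mul [TopologicalSpace X] (htt : NDSTotallyTransitive f)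
    {k : ℕ} (hk : 0 < k) {U V : Set X} (hUo : IsOpen U) (hU : U.Nonempty) (hVo : IsOpen V)
    (hV : V.Nonempty) (j : ℕ) : ∃ m, 0 < m ∧ (nds f 1 (j * k + m * k) '' U ∩ V).Nonempty := by
  obtain ⟨n, hn, hit⟩ := htt (k * (j + 1)) (by positivity) U V hUo hU hVo hV
  obtain ⟨m, hm⟩ : ∃ m, n * (j + 1) = j + 1 + m :=
    Nat.exists_eq_add_of_le (Nat.le_mul_of_pos_left _ hn)
  refine ⟨m + 1, m.succ_pos, ?_⟩
  have htime : j * k + (m + 1) * k = n * (k * (j + 1)) := by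
    rw [mul_left_comm, hm]; ring
  rwa [htime]

end Composition

section Autonomous

variable {X : Type*} [TopologicalSpace X] {F : X → X}

lemma MapTotallyTransitive.mapTransitive (htt : MapTotallyTransitive F) : MapTransitive F := by
  intro U V hUo hU hVo hV
  simpa only [Nat.mul_one] using htt 1 one_pos U V hUo hU hVo hV

lemma MapTransitive.surjective [CompactSpace X] [T2Space X] (hF : Continuous F)
    (htr : MapTransitive F) : Surjective F := by
  intro y
  by_contra hy
  have hopen : IsOpen (range F)ᶜ := (isCompact_range hF).isClosed.isOpen_compl
  obtain ⟨n, hn, -, ⟨x, -, rfl⟩, hx⟩ := htr _ _ hopen ⟨y, hy⟩ hopen ⟨y, hy⟩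
  obtain ⟨n, rfl⟩ := Nat.exists_eq_succ_of_ne_zero hn.ne'
  exact hx ⟨_, (iterate_succ_apply' F n x).symm⟩

lemma MapTotallyTransitive.mapWeaklyMixing (hF : Continuous F) (hsurj : Surjective F)
    (htt : MapTotallyTransitive F) (hper : Dense (periodicPts F)) : MapWeaklyMixing F := by
  intro U₁ U₂ V₁ V₂ hU₁o hU₁ hU₂o hU₂ hV₁o hV₁ hV₂o hV₂
  obtain ⟨a, -, hit₂⟩ := htt.mapTransitive U₂ V₂ hU₂o hU₂ hV₂o hV₂
  have hA : (U₂ ∩ F^[a] ⁻¹' V₂).Nonempty := by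
    obtain ⟨-, ⟨x, hx, rfl⟩, hxV⟩ := hit₂
    exact ⟨x, hx, hxV⟩
  obtain ⟨p, ⟨k, hk, hp⟩, hpU₂, hpV₂⟩ :=
    hper.exists_mem_open (hU₂o.inter (hV₂o.preimage (hF.iterate a))) hA
  obtain ⟨m, hm, -, ⟨x, hxU₁, rfl⟩, hxV₁⟩ := htt k hk U₁ (F^[a] ⁻¹' V₁) hU₁o hU₁
    (hV₁o.preimage (hF.iterate a)) ((hsurj.iterate a).nonempty_preimage.mpr hV₁)
  refine ⟨a + m * k, by positivity, ⟨_, ⟨x, hxU₁, rfl⟩, ?_⟩, ⟨_, ⟨p, hpU₂, rfl⟩, ?_⟩⟩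
  · rwa [iterate_add_apply]
  · rwa [iterate_add_apply, (hp.const_mul m).eq]

end Autonomous

namespace CollectivelyConverges

variable {X : Type*} [MetricSpace X] {f : ℕ → X → X} {F : X → X}

lemma isPeriodicPt (hcoll : CollectivelyConverges f F) {x : X} {k : ℕ} (hk : 0 < k)
    (hx : ∀ n, 0 < n → nds f 1 (k * n) x = x) : IsPeriodicPt F k x := by
  refine (eq_of_forall_dist_le fun ε hε => ?_).symm
  obtain ⟨r₀, hr₀⟩ := hcoll ε hε
  have hr : r₀ ≤ 1 + k * (r₀ + 1) := by nlinarith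
  have hreturn : nds f (1 + k * (r₀ + 1)) k x = x :=
    calc nds f (1 + k * (r₀ + 1)) k x
        = nds f (1 + k * (r₀ + 1)) k (nds f 1 (k * (r₀ + 1)) x) := by rw [hx _ r₀.succ_pos]
      _ = nds f 1 (k * (r₀ + 1 + 1)) x := by rw [← nds_add_apply, ← Nat.mul_succ]
      _ = x := hx _ (Nat.succ_pos _)
  simpa only [hreturn] using (hr₀ _ hr k hk x).le

lemma dense_periodicPts (hcoll : CollectivelyConverges f F) (hper : NDSDensePeriodicPoints f) :
    Dense (periodicPts F) :=
  hper.mono <| by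
    rintro x ⟨k, hk, hx⟩
    exact ⟨k, hk, hcoll.isPeriodicPt hk hx⟩

lemma exists_open_shadowing (hcoll : CollectivelyConverges f F) {V : Set X} (hVo : IsOpen V)
    {v : X} (hv : v ∈ V) : ∃ V', IsOpen V' ∧ v ∈ V' ∧ ∃ r₀, ∀ r, r₀ ≤ r → ∀ k, 1 ≤ k → ∀ x,
      (F^[k] x ∈ V' → nds f r k x ∈ V) ∧ (nds f r k x ∈ V' → F^[k] x ∈ V) := by
  obtain ⟨ε, hε, hball⟩ := isOpen_iff.mp hVo v hv
  obtain ⟨r₀, hr₀⟩ := hcoll (ε / 2) (half_pos hε)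
  refine ⟨ball v (ε / 2), isOpen_ball, mem_ball_self (half_pos hε), r₀,
    fun r hr k hk x => ⟨fun hF => hball ?_, fun hf => hball ?_⟩⟩
  · exact ball_half_subset _ hF (hr₀ r hr k hk x)
  · exact ball_half_subset _ hf (mem_ball_comm.mp (hr₀ r hr k hk x))

lemma mapTotallyTransitive (hcoll : CollectivelyConverges f F)
    (hcont : ∀ n, 1 ≤ n → Continuous (f n)) (hsurj : ∀ n, 1 ≤ n → Surjective (f n))
    (htt : NDSTotallyTransitive f) : MapTotallyTransitive F := by
  intro k hk A B hAo hA hBo ⟨b, hb⟩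
  obtain ⟨B', hB'o, hbB', r₀, hshadow⟩ := hcoll.exists_open_shadowing hBo hb
  have hpre : (nds f 1 (r₀ * k) ⁻¹' A).Nonempty :=
    (surjective_nds hsurj le_rfl _).nonempty_preimage.mpr hA
  obtain ⟨m, hm, -, ⟨x, hxA, rfl⟩, hxB'⟩ := htt.exists_add_mul hk
    (hAo.preimage (continuous_nds hcont le_rfl _)) hpre hB'o ⟨b, hbB'⟩ r₀
  rw [nds_add_apply] at hxB'
  have hr : r₀ ≤ 1 + r₀ * k := by nlinarith
  exact ⟨m, hm, _, ⟨_, hxA, rfl⟩, (hshadow _ hr _ (Nat.mul_pos hm hk) _).2 hxB'⟩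

lemma ndsWeaklyMixing (hcoll : CollectivelyConverges f F) (hfo : FeebleOpen f)
    (hwm : MapWeaklyMixing F) : NDSWeaklyMixing f := by
  intro U₁ U₂ V₁ V₂ hU₁o hU₁ hU₂o hU₂ hV₁o ⟨v₁, hv₁⟩ hV₂o ⟨v₂, hv₂⟩
  obtain ⟨V₁', hV₁'o, hv₁', r₁, hshadow₁⟩ := hcoll.exists_open_shadowing hV₁o hv₁
  obtain ⟨V₂', hV₂'o, hv₂', r₂, hshadow₂⟩ := hcoll.exists_open_shadowing hV₂o hv₂
  set r := max r₁ r₂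
  obtain ⟨N, hN, ⟨-, ⟨x₁, hx₁, rfl⟩, hx₁V⟩, ⟨-, ⟨x₂, hx₂, rfl⟩, hx₂V⟩⟩ :=
    hwm _ _ V₁' V₂' isOpen_interior (hfo.interior_image_nds_nonempty r hU₁o hU₁)
      isOpen_interior (hfo.interior_image_nds_nonempty r hU₂o hU₂) hV₁'o ⟨v₁, hv₁'⟩ hV₂'o
      ⟨v₂, hv₂'⟩
  obtain ⟨u₁, hu₁, rfl⟩ := interior_subset hx₁
  obtain ⟨u₂, hu₂, rfl⟩ := interior_subset hx₂
  refine ⟨r + N, by omega, ⟨_, ⟨u₁, hu₁, rfl⟩, ?_⟩, ⟨_, ⟨u₂, hu₂, rfl⟩, ?_⟩⟩ <;>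
    rw [nds_add_apply]
  · exact (hshadow₁ _ (by omega) N hN _).1 hx₁V
  · exact (hshadow₂ _ (by omega) N hN _).1 hx₂V

end CollectivelyConverges

theorem totallyTransitive_densePeriodic_implies_weaklyMixing_general {X : Type*} [MetricSpace X]
    [CompactSpace X]
    (f : ℕ → X → X) (F : X → X)
    (hcont : ∀ n : ℕ, 1 ≤ n → Continuous (f n))
    (hfo : FeebleOpen f)
    (hsurj : ∀ n : ℕ, 1 ≤ n → Function.Surjective (f n))
    (hF : Continuous F)
    (hcoll : CollectivelyConverges f F)
    (htt : NDSTotallyTransitive f) (hper : NDSDensePeriodicPoints f) :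
    NDSWeaklyMixing f := by
  have httF : MapTotallyTransitive F := hcoll.mapTotallyTransitive hcont hsurj htt
  have hwmF : MapWeaklyMixing F :=
    httF.mapWeaklyMixing hF (httF.mapTransitive.surjective hF) (hcoll.dense_periodicPts hper)
  exact hcoll.ndsWeaklyMixing hfo hwmF

theorem totallyTransitive_densePeriodic_implies_weaklyMixing {X : Type*} [MetricSpace X]
    [CompactSpace X]
    (f : ℕ → X → X) (F : X → X)
    (hcont : ∀ n : ℕ, 1 ≤ n → Continuous (f n))
    (hfo : FeebleOpen f)
    (hsurj : ∀ n : ℕ, 1 ≤ n → Function.Surjective (f n))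
    (hF : Continuous F)
    (hunif : TendstoUniformly (fun n x => f n x) F Filter.atTop)
    (hcoll : CollectivelyConverges f F)
    (htt : NDSTotallyTransitive f) (hper : NDSDensePeriodicPoints f) :
    NDSWeaklyMixing f :=
  totallyTransitive_densePeriodic_implies_weaklyMixing_general f F hcont hfo hsurj hF hcoll htt hper
end
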